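/- Let m, n ≥ 1, let μ ∈ ℝ^m and ν ∈ ℝⁿ be probability vectors with all entries of μ nonnegative and at least one entry of μ positive, let C = (c_{ij}) ∈ ℝ^{m×n} and λ > 0, and let E_λ(ψ) = λ Σ_{i=1}^m μ_i log(Σ_{j=1}^n e^{(ψ_j − c_{ij})/λ}) − Σ_{j=1}^n ν_j ψ_j − λ log n. If ψ₁ and ψ₂ both minimize E_λ over ℝⁿ, then there exists k ∈ ℝ with ψ₂ = ψ₁ + k·𝟙, where 𝟙 = (1,…,1). Consequently the induced approximate transport plan is unique: the matrix with entries μ_i · e^{(ψ_j − c_{ij})/λ} / (Σ_{k=1}^n e^{(ψ_k − c_{ik})/λ}) is the same for every minimizer ψ of E_λ. -/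

import Mathlib

/-!
By Cauchy–Schwarz for the vectors `exp (x / 2)` and `exp (y / 2)`,
`(∑ exp ((x + y) / 2))² ≤ ∑ exp x * ∑ exp y`, so log-sum-exp is midpoint convex, and Lagrange's
identity shows that equality forces `y - x` to be constant. If `ψ₁` and `ψ₂` both minimize `E_λ`,
their midpoint cannot do better; as the linear part of `E_λ` is affine, the row of `C` at an
index with `μ i > 0` must be an equality case, so `ψ₂ - ψ₁` is constant. The transport plan is
a row-wise softmax, which does not see constant shifts.
-/

open Finset Real

namespace Finset

variable {ι R : Type*}

theorem two_mul_sum_sq_mul_sum_sq_sub_sq_sum_mul [CommRing R] (s : Finset ι) (f g : ι → R) :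
    2 * ((∑ i ∈ s, f i ^ 2) * (∑ i ∈ s, g i ^ 2) - (∑ i ∈ s, f i * g i) ^ 2) =
      ∑ i ∈ s, ∑ j ∈ s, (f i * g j - f j * g i) ^ 2 := by
  symm
  calc ∑ i ∈ s, ∑ j ∈ s, (f i * g j - f j * g i) ^ 2
      = ∑ i ∈ s, ∑ j ∈ s, (f i ^ 2 * g j ^ 2 + f j ^ 2 * g i ^ 2 - 2 * (f i * g i * (f j * g j))) :=
        sum_congr rfl fun _ _ ↦ sum_congr rfl fun _ _ ↦ by ring
    _ = ∑ i ∈ s, ∑ j ∈ s, f i ^ 2 * g j ^ 2 + ∑ i ∈ s, ∑ j ∈ s, f j ^ 2 * g i ^ 2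
          - 2 * ∑ i ∈ s, ∑ j ∈ s, f i * g i * (f j * g j) := by
        simp only [sum_add_distrib, sum_sub_distrib, mul_sum]
    _ = _ := by
        rw [sum_comm (f := fun i j ↦ f j ^ 2 * g i ^ 2), ← sum_mul_sum, ← sum_mul_sum, sq (∑ i ∈ s, _)]
        ring

theorem mul_eq_mul_of_sq_sum_mul_eq [CommRing R] [LinearOrder R] [IsStrictOrderedRing R]
    {s : Finset ι} {f g : ι → R}
    (h : (∑ i ∈ s, f i * g i) ^ 2 = (∑ i ∈ s, f i ^ 2) * ∑ i ∈ s, g i ^ 2) {i j : ι}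
    (hi : i ∈ s) (hj : j ∈ s) : f i * g j = f j * g i := by
  have hzero : ∑ i ∈ s, ∑ j ∈ s, (f i * g j - f j * g i) ^ 2 = 0 := by
    rw [← two_mul_sum_sq_mul_sum_sq_sub_sq_sum_mul, h, sub_self, mul_zero]
  have hi' := (sum_eq_zero_iff_of_nonneg fun _ _ ↦ sum_nonneg fun _ _ ↦ sq_nonneg _).1 hzero i hi
  have hij := (sum_eq_zero_iff_of_nonneg fun _ _ ↦ sq_nonneg _).1 hi' j hj
  exact sub_eq_zero.1 (pow_eq_zero_iff two_ne_zero |>.1 hij)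

end Finset

section LogSumExp

variable {ι : Type*} [Fintype ι]

noncomputable def logSumExp (x : ι → ℝ) : ℝ := log (∑ j, exp (x j))

lemma sum_exp_pos [Nonempty ι] (x : ι → ℝ) : 0 < ∑ j, exp (x j) :=
  sum_pos (fun _ _ ↦ exp_pos _) univ_nonempty

lemma exp_midpoint_eq_mul (a b : ℝ) : exp ((a + b) / 2) = exp (a / 2) * exp (b / 2) := by
  rw [← exp_add, add_div]

lemma exp_half_sq (a : ℝ) : exp (a / 2) ^ 2 = exp a := by
  rw [sq, ← exp_add, add_halves]

lemma sq_sum_exp_midpoint_le (x y : ι → ℝ) :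
    (∑ j, exp ((x j + y j) / 2)) ^ 2 ≤ (∑ j, exp (x j)) * ∑ j, exp (y j) := by
  simpa only [exp_midpoint_eq_mul, exp_half_sq] using
    sum_mul_sq_le_sq_mul_sq univ (fun j ↦ exp (x j / 2)) fun j ↦ exp (y j / 2)

lemma two_mul_logSumExp_midpoint_sub [Nonempty ι] (x y : ι → ℝ) :
    2 * logSumExp (fun j ↦ (x j + y j) / 2) - (logSumExp x + logSumExp y) =
      log ((∑ j, exp ((x j + y j) / 2)) ^ 2) - log ((∑ j, exp (x j)) * ∑ j, exp (y j)) := by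
  rw [log_pow, log_mul (sum_exp_pos x).ne' (sum_exp_pos y).ne']
  push_cast
  rfl

lemma logSumExp_midpoint_le [Nonempty ι] (x y : ι → ℝ) :
    logSumExp (fun j ↦ (x j + y j) / 2) ≤ (logSumExp x + logSumExp y) / 2 := by
  have hlog := log_le_log (pow_pos (sum_exp_pos _) 2) (sq_sum_exp_midpoint_le x y)
  linarith [two_mul_logSumExp_midpoint_sub x y]

lemma exists_eq_add_const_of_logSumExp_midpoint_eq [Nonempty ι] {x y : ι → ℝ}
    (h : logSumExp (fun j ↦ (x j + y j) / 2) = (logSumExp x + logSumExp y) / 2) :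
    ∃ c, ∀ j, y j = x j + c := by
  have hsq : (∑ j, exp ((x j + y j) / 2)) ^ 2 = (∑ j, exp (x j)) * ∑ j, exp (y j) :=
    log_injOn_pos (pow_pos (sum_exp_pos _) 2) (mul_pos (sum_exp_pos x) (sum_exp_pos y))
      (by linarith [two_mul_logSumExp_midpoint_sub x y])
  simp only [exp_midpoint_eq_mul, ← exp_half_sq (x _), ← exp_half_sq (y _)] at hsq
  obtain ⟨j₀⟩ := ‹Nonempty ι›
  refine ⟨y j₀ - x j₀, fun j ↦ ?_⟩
  have hmul := mul_eq_mul_of_sq_sum_mul_eq hsq (mem_univ j) (mem_univ j₀)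
  rw [← exp_add, ← exp_add, exp_eq_exp] at hmul
  linarith

lemma exp_div_sum_exp_add_const (x : ι → ℝ) (c : ℝ) (j : ι) :
    exp (x j + c) / ∑ k, exp (x k + c) = exp (x j) / ∑ k, exp (x k) := by
  simp only [exp_add, ← sum_mul, mul_div_mul_right _ _ (exp_pos c).ne']

end LogSumExp

section SmoothedKantorovich

variable {ι κ : Type*} [Fintype ι] [Fintype κ]

noncomputable def smoothedKantorovich (μ : ι → ℝ) (ν : κ → ℝ) (C : ι → κ → ℝ) (lam : ℝ)
    (ψ : κ → ℝ) : ℝ :=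
  lam * ∑ i, μ i * logSumExp (fun j ↦ (ψ j - C i j) / lam) - ∑ j, ν j * ψ j
    - lam * log (Fintype.card κ)

variable (μ : ι → ℝ) (ν : κ → ℝ) (C : ι → κ → ℝ) (lam : ℝ)

lemma smoothedKantorovich_midpoint_defect (ψ₁ ψ₂ : κ → ℝ) :
    (smoothedKantorovich μ ν C lam ψ₁ + smoothedKantorovich μ ν C lam ψ₂) / 2
        - smoothedKantorovich μ ν C lam (fun j ↦ (ψ₁ j + ψ₂ j) / 2) =
      lam * ∑ i, μ i * ((logSumExp (fun j ↦ (ψ₁ j - C i j) / lam)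
          + logSumExp (fun j ↦ (ψ₂ j - C i j) / lam)) / 2
        - logSumExp (fun j ↦ ((ψ₁ j - C i j) / lam + (ψ₂ j - C i j) / lam) / 2)) := by
  have hrow : ∀ i, (fun j ↦ ((ψ₁ j + ψ₂ j) / 2 - C i j) / lam) =
      fun j ↦ ((ψ₁ j - C i j) / lam + (ψ₂ j - C i j) / lam) / 2 :=
    fun i ↦ funext fun j ↦ by ring
  simp only [smoothedKantorovich, hrow, mul_sub, mul_add, mul_div_assoc', sum_sub_distrib,
    sum_add_distrib, ← sum_div, mul_sum]
  ring

lemma exists_eq_add_const_of_forall_smoothedKantorovich_le [Nonempty κ] (hlam : 0 < lam)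
    (hμ : ∀ i, 0 ≤ μ i) {i₀ : ι} (hi₀ : 0 < μ i₀) {ψ₁ ψ₂ : κ → ℝ}
    (h₁ : ∀ φ, smoothedKantorovich μ ν C lam ψ₁ ≤ smoothedKantorovich μ ν C lam φ)
    (h₂ : ∀ φ, smoothedKantorovich μ ν C lam ψ₂ ≤ smoothedKantorovich μ ν C lam φ) :
    ∃ k, ∀ j, ψ₂ j = ψ₁ j + k := by
  set defect : ι → ℝ := fun i ↦ (logSumExp (fun j ↦ (ψ₁ j - C i j) / lam)
      + logSumExp (fun j ↦ (ψ₂ j - C i j) / lam)) / 2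
    - logSumExp (fun j ↦ ((ψ₁ j - C i j) / lam + (ψ₂ j - C i j) / lam) / 2)
  have hdefect : ∀ i, 0 ≤ μ i * defect i :=
    fun i ↦ mul_nonneg (hμ i) (sub_nonneg.2 (logSumExp_midpoint_le _ _))
  have hsum : ∑ i, μ i * defect i ≤ 0 := by
    refine nonpos_of_mul_nonpos_right ?_ hlam
    linarith [smoothedKantorovich_midpoint_defect μ ν C lam ψ₁ ψ₂, h₁ ψ₂, h₂ ψ₁,
      h₁ fun j ↦ (ψ₁ j + ψ₂ j) / 2]
  have hi₀_defect : defect i₀ = 0 := by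
    have hterm := (sum_eq_zero_iff_of_nonneg fun i _ ↦ hdefect i).1
      (hsum.antisymm (sum_nonneg fun i _ ↦ hdefect i)) i₀ (mem_univ _)
    exact (mul_eq_zero.1 hterm).resolve_left hi₀.ne'
  obtain ⟨c, hc⟩ := exists_eq_add_const_of_logSumExp_midpoint_eq (sub_eq_zero.1 hi₀_defect).symm
  refine ⟨lam * c, fun j ↦ ?_⟩
  have hcj := hc j
  field_simp at hcj
  linarith

end SmoothedKantorovich

theorem smoothed_kantorovich_minimizers_unique_plan_general
    (m n : ℕ) (hn : 1 ≤ n)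
    (μ : Fin m → ℝ) (ν : Fin n → ℝ)
    (hμ0 : ∀ i, 0 ≤ μ i) (hμpos : ∃ i, 0 < μ i)
    (C : Fin m → Fin n → ℝ) (lam : ℝ) (hlam : 0 < lam)
    (Elam : (Fin n → ℝ) → ℝ)
    (hElam : ∀ ψ, Elam ψ =
      lam * ∑ i, μ i * Real.log (∑ j, Real.exp ((ψ j - C i j) / lam))
        - ∑ j, ν j * ψ j - lam * Real.log n)
    (ψ₁ ψ₂ : Fin n → ℝ)
    (hmin₁ : ∀ φ, Elam ψ₁ ≤ Elam φ) (hmin₂ : ∀ φ, Elam ψ₂ ≤ Elam φ) :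
    (∃ k : ℝ, ψ₂ = ψ₁ + k • (1 : Fin n → ℝ)) ∧
      ∀ i j, μ i * (Real.exp ((ψ₁ j - C i j) / lam) /
          ∑ k, Real.exp ((ψ₁ k - C i k) / lam)) =
        μ i * (Real.exp ((ψ₂ j - C i j) / lam) /
          ∑ k, Real.exp ((ψ₂ k - C i k) / lam)) := by
  have : Nonempty (Fin n) := ⟨⟨0, hn⟩⟩
  have hE : Elam = smoothedKantorovich μ ν C lam :=
    funext fun ψ ↦ by rw [hElam, smoothedKantorovich, Fintype.card_fin]; rfl
  subst hE
  obtain ⟨i₀, hi₀⟩ := hμpos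
  obtain ⟨k, hk⟩ :=
    exists_eq_add_const_of_forall_smoothedKantorovich_le μ ν C lam hlam hμ0 hi₀ hmin₁ hmin₂
  have hrow : ∀ i j, (ψ₂ j - C i j) / lam = (ψ₁ j - C i j) / lam + k / lam := by
    intro i j
    rw [hk j]
    ring
  refine ⟨⟨k, funext fun j ↦ by simp [hk]⟩, fun i j ↦ ?_⟩
  simp only [hrow]
  rw [exp_div_sum_exp_add_const (fun j ↦ (ψ₁ j - C i j) / lam)]

/-- Any two minimizers of the smoothed Kantorovich functional `E_λ` differ
by a constant vector `k·𝟙`, and consequently the induced approximate transport plan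
`μ_i e^{(ψ_j - c_{ij})/λ} / (∑ k, e^{(ψ_k - c_{ik})/λ})` is the same for every minimizer. -/
theorem smoothed_kantorovich_minimizers_unique_plan
    (m n : ℕ) (hm : 1 ≤ m) (hn : 1 ≤ n)
    (μ : Fin m → ℝ) (ν : Fin n → ℝ)
    (hμ0 : ∀ i, 0 ≤ μ i) (hμ1 : ∑ i, μ i = 1) (hμpos : ∃ i, 0 < μ i)
    (hν0 : ∀ j, 0 ≤ ν j) (hν1 : ∑ j, ν j = 1)
    (C : Fin m → Fin n → ℝ) (lam : ℝ) (hlam : 0 < lam)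
    (Elam : (Fin n → ℝ) → ℝ)
    (hElam : ∀ ψ, Elam ψ =
      lam * ∑ i, μ i * Real.log (∑ j, Real.exp ((ψ j - C i j) / lam))
        - ∑ j, ν j * ψ j - lam * Real.log n)
    (ψ₁ ψ₂ : Fin n → ℝ)
    (hmin₁ : ∀ φ, Elam ψ₁ ≤ Elam φ) (hmin₂ : ∀ φ, Elam ψ₂ ≤ Elam φ) :
    (∃ k : ℝ, ψ₂ = ψ₁ + k • (1 : Fin n → ℝ)) ∧
      ∀ i j, μ i * (Real.exp ((ψ₁ j - C i j) / lam) /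
          ∑ k, Real.exp ((ψ₁ k - C i k) / lam)) =
        μ i * (Real.exp ((ψ₂ j - C i j) / lam) /
          ∑ k, Real.exp ((ψ₂ k - C i k) / lam)) :=
  smoothed_kantorovich_minimizers_unique_plan_general m n hn μ ν hμ0 hμpos C lam hlam Elam hElam ψ₁
    ψ₂ hmin₁ hmin₂
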